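/- arXiv:1810.07462 — 4 statements merged into one kernel-verified Lean document; each statement's English description precedes it below -/
import Mathlib

section
/- Let M be a matroid of rank n, let S be an independent set in M, and let B be a basis of M. Then there exists an injection φ : S → B such that for every x ∈ S, the set (S \ {x}) ∪ {φ(x)} is independent. -/
/-!
Join `x ∈ S` to `y ∈ B` when `insert y (S \ {x})` is independent, and apply Hall's theorem.
For `T ⊆ S`, the closure of `S \ T` is the intersection of the closures of the `S \ {x}`,
`x ∈ T` (as `S` is independent), so every `y ∈ B` outside `cl (S \ T)` is a neighbour of `T`.
Since `B ∩ cl (S \ T)` is independent and spanned by `S \ T`, it has at most `|S \ T|`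
elements, so `T` has at least `|B| - |S \ T| ≥ |S| - |S \ T| = |T|` neighbours.
-/

open Set

lemma Set.Finite.exists_injective_of_forall_encard_le_encard_biUnion {ι α : Type*} {S : Set ι}
    (hS : S.Finite) (N : ι → Set α) (hN : ∀ i ∈ S, (N i).Finite)
    (hall : ∀ T ⊆ S, T.encard ≤ (⋃ i ∈ T, N i).encard) :
    ∃ f : S → α, Function.Injective f ∧ ∀ i : S, f i ∈ N i := by
  classical
  have := hS.to_subtype
  let N' (i : S) : Finset α := (hN i i.2).toFinset
  have hall' : ∀ A : Finset S, A.card ≤ (A.biUnion N').card := by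
    intro A
    have hA := hall (Subtype.val '' (A : Set S)) (by simp)
    have : ⋃ i ∈ Subtype.val '' (A : Set S), N i = (A.biUnion N' : Set α) := by
      simp [N']
    rwa [Subtype.val_injective.encard_image, encard_coe_eq_coe_finsetCard, this,
      encard_coe_eq_coe_finsetCard, Nat.cast_le] at hA
  obtain ⟨f, hf_inj, hf⟩ := (Finset.all_card_le_biUnion_card_iff_existsInjective' N').mp hall'
  exact ⟨f, hf_inj, fun i ↦ by simpa [N'] using hf i⟩

namespace Matroid

variable {α : Type*} {M : Matroid α} {I J S T B : Set α} {y : α}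

lemma Indep.encard_le_encard_of_subset_closure (hI : M.Indep I) (hJ : M.Indep J)
    (hIJ : I ⊆ M.closure J) : I.encard ≤ J.encard := by
  rw [← hJ.eRk_eq_encard, ← eRk_closure_eq]
  exact hI.encard_le_eRk_of_subset hIJ

lemma Indep.exists_indep_insert_sdiff_singleton_of_notMem_closure (hS : M.Indep S)
    (hT : T.Nonempty) (hyE : y ∈ M.E) (hy : y ∉ M.closure (S \ T)) :
    ∃ x ∈ T, M.Indep (insert y (S \ {x})) := by
  have hST : S \ T = ⋂ x ∈ T, S \ {x} := by
    obtain ⟨x₀, hx₀⟩ := hT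
    ext z
    simp only [mem_sdiff, mem_iInter, mem_singleton_iff]
    exact ⟨fun ⟨hzS, hzT⟩ x hx ↦ ⟨hzS, fun hzx ↦ hzT (hzx ▸ hx)⟩,
      fun h ↦ ⟨(h x₀ hx₀).1, fun hzT ↦ (h z hzT).2 rfl⟩⟩
  rw [hST, closure_biInter_eq_biInter_closure_of_biUnion_indep (I := fun x ↦ S \ {x}) hT
    (hS.subset (iUnion₂_subset fun _ _ ↦ sdiff_subset))] at hy
  simp only [mem_iInter, not_forall] at hy
  obtain ⟨x, hxT, hyx⟩ := hy
  exact ⟨x, hxT, (hS.subset sdiff_subset).insert_indep_iff.2 (Or.inl ⟨hyE, hyx⟩)⟩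

lemma Indep.encard_le_encard_biUnion_exchange (hS : M.Indep S) (hSfin : S.Finite)
    (hB : M.IsBase B) (hTS : T ⊆ S) :
    T.encard ≤ (⋃ x ∈ T, {y ∈ B | M.Indep (insert y (S \ {x}))}).encard := by
  obtain rfl | hT := T.eq_empty_or_nonempty
  · simp
  set C := M.closure (S \ T)
  have hBC : (B ∩ C).encard ≤ (S \ T).encard :=
    (hB.indep.subset inter_subset_left).encard_le_encard_of_subset_closure
      (hS.subset sdiff_subset) inter_subset_right
  have hBN : (B \ C).encard ≤ (⋃ x ∈ T, {y ∈ B | M.Indep (insert y (S \ {x}))}).encard := by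
    refine encard_le_encard fun y ⟨hyB, hyC⟩ ↦ ?_
    obtain ⟨x, hxT, hx⟩ :=
      hS.exists_indep_insert_sdiff_singleton_of_notMem_closure hT (hB.subset_ground hyB) hyC
    exact mem_biUnion hxT ⟨hyB, hx⟩
  refine (ENat.add_le_add_iff_left (k := (S \ T).encard) hSfin.sdiff.encard_lt_top.ne).1 ?_
  calc (S \ T).encard + T.encard = S.encard := encard_sdiff_add_encard_of_subset hTS
    _ ≤ B.encard := hB.encard_eq_eRank ▸ hS.encard_le_eRank
    _ = (B \ C).encard + (B ∩ C).encard := (encard_sdiff_add_encard_inter B C).symm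
    _ ≤ _ := (add_le_add hBN hBC).trans_eq (add_comm _ _)

end Matroid

theorem stmt_4 {α : Type*} (M : Matroid α) [M.Finite] (S B : Set α)
    (hS : M.Indep S) (hB : M.IsBase B) :
    ∃ φ : α → α, Set.InjOn φ S ∧
      ∀ x ∈ S, φ x ∈ B ∧ M.Indep (insert (φ x) (S \ {x})) := by
  obtain ⟨f, hf_inj, hf⟩ :=
    hS.finite.exists_injective_of_forall_encard_le_encard_biUnion _
      (fun _ _ ↦ hB.finite.subset (sep_subset _ _))
      (fun _ hT ↦ hS.encard_le_encard_biUnion_exchange hS.finite hB hT)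
  have hφ (x : S) : Function.extend Subtype.val f id x = f x :=
    Subtype.val_injective.extend_apply f id x
  refine ⟨Function.extend Subtype.val f id, fun x hx y hy hxy ↦ ?_, fun x hx ↦ ?_⟩
  · rw [hφ ⟨x, hx⟩, hφ ⟨y, hy⟩] at hxy
    exact congrArg Subtype.val (hf_inj hxy)
  · rw [hφ ⟨x, hx⟩]
    exact hf ⟨x, hx⟩
end

section
/- Let M be a matroid, S an independent set, B a basis, and W ⊆ S. Then there are at least |W| elements y ∈ B such that (S \ W) ∪ {y} is independent and, moreover, (S \ {x}) ∪ {y} is independent for some x ∈ W. -/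
/-!
Every `y ∈ B` outside `cl(S \ W)` qualifies: `insert y (S \ W)` is independent, and since
`cl(S \ W) = ⋂ x ∈ W, cl(S \ {x})` for independent `S` and nonempty `W`, `y` also avoids
`cl(S \ {x})` for some `x ∈ W`. There are at least `|W|` such `y`: the independent set
`B ∩ cl(S \ W)` has at most `r(S \ W) = |S| - |W|` elements, while `|B| ≥ |S|`.
-/

open Set

namespace Matroid
variable {α : Type*} {M : Matroid α} {S B W : Set α} {y : α}

lemma IsBase.eRank_le_eRk_add_encard_sdiff_closure (hB : M.IsBase B) (X : Set α) :
    M.eRank ≤ M.eRk X + (B \ M.closure X).encard := by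
  have hinter : (B ∩ M.closure X).encard ≤ M.eRk X := by
    rw [← M.eRk_closure_eq X]
    exact (hB.indep.subset inter_subset_left).encard_le_eRk_of_subset inter_subset_right
  calc M.eRank = (B ∩ M.closure X).encard + (B \ M.closure X).encard := by
        rw [← hB.encard_eq_eRank, add_comm, encard_sdiff_add_encard_inter]
    _ ≤ M.eRk X + (B \ M.closure X).encard := add_le_add_left hinter _

lemma Indep.encard_le_encard_sdiff_closure_sdiff (hS : M.Indep S) (hB : M.IsBase B)
    (hW : W ⊆ S) (hfin : (S \ W).Finite) :
    W.encard ≤ (B \ M.closure (S \ W)).encard := by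
  have hbound := hB.eRank_le_eRk_add_encard_sdiff_closure (S \ W)
  rw [(hS.subset sdiff_subset).eRk_eq_encard] at hbound
  refine (ENat.add_le_add_iff_left hfin.encard_lt_top.ne).1 ?_
  rw [encard_sdiff_add_encard_of_subset hW]
  exact hS.encard_le_eRank.trans hbound

lemma Indep.closure_sdiff_eq_biInter (hS : M.Indep S) (hW : W.Nonempty) :
    M.closure (S \ W) = ⋂ x ∈ W, M.closure (S \ {x}) := by
  have : Nonempty W := hW.to_subtype
  rw [biInter_eq_iInter, ← hS.closure_iInter_eq_biInter_closure_of_forall_subset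
    (fun _ ↦ sdiff_subset)]
  congr 1
  ext z
  simp only [mem_sdiff, mem_iInter, mem_singleton_iff]
  exact ⟨fun h i ↦ ⟨h.1, fun hzi ↦ h.2 (hzi ▸ i.2)⟩,
    fun h ↦ ⟨(h ⟨_, hW.some_mem⟩).1, fun hzW ↦ (h ⟨z, hzW⟩).2 rfl⟩⟩

lemma Indep.exists_insert_sdiff_singleton_indep (hS : M.Indep S) (hW : W.Nonempty)
    (hy : y ∈ M.E) (hycl : y ∉ M.closure (S \ W)) :
    ∃ x ∈ W, M.Indep (insert y (S \ {x})) := by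
  rw [hS.closure_sdiff_eq_biInter hW, mem_iInter₂] at hycl
  push Not at hycl
  obtain ⟨x, hxW, hyx⟩ := hycl
  exact ⟨x, hxW, (hS.subset sdiff_subset).insert_indep_iff.2 (Or.inl ⟨hy, hyx⟩)⟩

end Matroid

open Matroid in
theorem stmt_5 {α : Type*} (M : Matroid α) [M.Finite] (S B W : Set α)
    (hS : M.Indep S) (hB : M.IsBase B) (hW : W ⊆ S) :
    W.ncard ≤ {y | y ∈ B ∧ M.Indep (insert y (S \ W)) ∧
      ∃ x ∈ W, M.Indep (insert y (S \ {x}))}.ncard := by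
  obtain rfl | hWne := W.eq_empty_or_nonempty
  · simp
  have hsub : B \ M.closure (S \ W) ⊆ {y | y ∈ B ∧ M.Indep (insert y (S \ W)) ∧
      ∃ x ∈ W, M.Indep (insert y (S \ {x}))} := by
    rintro y ⟨hyB, hycl⟩
    have hyE : y ∈ M.E := hB.subset_ground hyB
    exact ⟨hyB, (hS.subset sdiff_subset).insert_indep_iff.2 (Or.inl ⟨hyE, hycl⟩),
      hS.exists_insert_sdiff_singleton_indep hWne hyE hycl⟩
  have hcount := (hS.encard_le_encard_sdiff_closure_sdiff hB hW hS.finite.sdiff).trans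
    (encard_le_encard hsub)
  exact ENat.toNat_le_toNat hcount (hB.finite.subset fun y hy ↦ hy.1).encard_lt_top.ne
end

section
/- Let B₁, …, Bₙ be bases of a rank-n matroid. Then there exist two disjoint transversal bases, i.e., two bases T₁, T₂ of M such that Tⱼ contains exactly one distinguished element from each Bᵢ, and for each i the elements chosen from Bᵢ by T₁ and T₂ are distinct, provided n ≥ 2. -/
/-!
Extend two disjoint independent partial transversals one colour at a time. While at most `r - 2`
colours are used (`r` the rank), the base `B c` has an element `y` outside the span of the second
transversal and, since `B c \ {y}` is still larger than the first one, an element `x ≠ y` outside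
the span of the first. At the last colour this fails only if `y` is the unique element of `B c`
outside either span; then both spans equal the hyperplane `H` spanned by `B c \ {y}`. Trading the
colour-`c₀` element of the second transversal for some `w ∈ B c₀ \ H` yields a set spanning a
different hyperplane, which therefore misses some `y' ∈ B c \ {y}`; now `y` and `y'` complete the
two transversals.
-/

open Set Function

namespace Matroid

variable {α ι : Type*} {M : Matroid α} {I J : Set α}

lemma Indep.closure_eq_closure_of_subset_closure (hI : M.Indep I) (hJ : M.Indep J)
    (hIfin : I.Finite) (hIJ : I ⊆ M.closure J) (hJI : J.encard ≤ I.encard) :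
    M.closure I = M.closure J := by
  have h := (M.isRkFinite_of_finite hIfin).closure_eq_closure_of_subset_of_eRk_ge_eRk hIJ
    (by rwa [eRk_closure_eq, hJ.eRk_eq_encard, hI.eRk_eq_encard])
  rwa [closure_closure] at h

lemma Indep.exists_mem_notMem_closure_of_encard_lt (hI : M.Indep I) (hJ : M.Indep J)
    (hIJ : I.encard < J.encard) : ∃ e ∈ J, e ∈ M.E \ M.closure I := by
  obtain ⟨e, ⟨heJ, heI⟩, he⟩ := hI.augment hJ hIJ
  exact ⟨e, heJ, (hI.insert_indep_iff_of_notMem heI).1 he⟩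

structure IsIndepTransversal (M : Matroid α) (B : ι → Set α) (S : Set ι) (t : ι → α) : Prop where
  mem : ∀ i ∈ S, t i ∈ B i
  injOn : InjOn t S
  indep : M.Indep (t '' S)

def HasDisjointIndepTransversals (M : Matroid α) (B : ι → Set α) (S : Set ι) : Prop :=
  ∃ t₁ t₂ : ι → α, M.IsIndepTransversal B S t₁ ∧ M.IsIndepTransversal B S t₂ ∧
    ∀ i ∈ S, t₁ i ≠ t₂ i

variable {B : ι → Set α} {S T : Set ι} {t t₁ t₂ : ι → α} {c c₀ : ι} {x y : α}

namespace IsIndepTransversal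

lemma empty (M : Matroid α) (B : ι → Set α) (t : ι → α) : M.IsIndepTransversal B ∅ t :=
  ⟨by simp, injOn_empty t, by simp⟩

lemma mono (h : M.IsIndepTransversal B S t) (hTS : T ⊆ S) : M.IsIndepTransversal B T t :=
  ⟨fun i hi ↦ h.mem i (hTS hi), h.injOn.mono hTS, h.indep.subset (image_mono hTS)⟩

lemma encard_image (h : M.IsIndepTransversal B S t) : (t '' S).encard = S.encard :=
  h.injOn.encard_image

lemma isBase_range [Finite ι] (h : M.IsIndepTransversal B univ t) (hι : ENat.card ι = M.eRank) :
    M.IsBase (range t) := by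
  rw [← image_univ]
  refine h.indep.isBase_of_eRk_ge (toFinite _) ?_
  rw [h.indep.eRk_eq_encard, h.encard_image, encard_univ, hι]

lemma exists_mem_notMem_closure (h : M.IsIndepTransversal B S t) (hBc : M.IsBase (B c))
    (hS : S.encard < M.eRank) : ∃ x ∈ B c, x ∈ M.E \ M.closure (t '' S) :=
  h.indep.exists_mem_notMem_closure_of_encard_lt hBc.indep <| by
    rwa [h.encard_image, hBc.encard_eq_eRank]

lemma encard_lt_eRank [M.RankFinite] (h : M.IsIndepTransversal B S t)
    (hS : S.encard + 1 = M.eRank) : S.encard < M.eRank :=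
  hS ▸ (ENat.lt_add_one_iff (h.encard_image ▸ h.indep.finite.encard_lt_top.ne)).2 le_rfl

lemma update_insert [DecidableEq ι] (h : M.IsIndepTransversal B S t) (hc : c ∉ S) (hxB : x ∈ B c)
    (hx : x ∈ M.E \ M.closure (t '' S)) : M.IsIndepTransversal B (insert c S) (update t c x) := by
  have heq : EqOn (update t c x) t S := fun i hi ↦ update_of_ne (ne_of_mem_of_not_mem hi hc) _ _
  have hxI : x ∉ t '' S := fun h' ↦ hx.2 (M.subset_closure _ h.indep.subset_ground h')
  refine ⟨?_, ?_, ?_⟩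
  · rintro i (rfl | hi)
    · simpa
    · rw [heq hi]; exact h.mem i hi
  · rw [injOn_insert hc, heq.image_eq, update_self]
    exact ⟨h.injOn.congr heq.symm, hxI⟩
  · rw [image_insert_eq, heq.image_eq, update_self]
    exact (h.indep.insert_indep_iff_of_notMem hxI).2 hx

lemma hasDisjointIndepTransversals_insert (h₁ : M.IsIndepTransversal B S t₁)
    (h₂ : M.IsIndepTransversal B S t₂) (hne : ∀ i ∈ S, t₁ i ≠ t₂ i) (hc : c ∉ S)
    (hxB : x ∈ B c) (hyB : y ∈ B c) (hx : x ∈ M.E \ M.closure (t₁ '' S))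
    (hy : y ∈ M.E \ M.closure (t₂ '' S)) (hxy : x ≠ y) :
    M.HasDisjointIndepTransversals B (insert c S) := by
  classical
  refine ⟨update t₁ c x, update t₂ c y, h₁.update_insert hc hxB hx, h₂.update_insert hc hyB hy, ?_⟩
  rintro i (rfl | hi)
  · simpa
  · have hic : i ≠ c := ne_of_mem_of_not_mem hi hc
    rw [update_of_ne hic, update_of_ne hic]
    exact hne i hi

lemma hasDisjointIndepTransversals_insert_of_subset_closure [M.RankFinite]
    (h₁ : M.IsIndepTransversal B S t₁) (h₂ : M.IsIndepTransversal B S t₂)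
    (hne : ∀ i ∈ S, t₁ i ≠ t₂ i) (hc : c ∉ S) (hc₀ : c₀ ∈ S) (hBc : M.IsBase (B c))
    (hBc₀ : M.IsBase (B c₀)) (hS : S.encard + 1 = M.eRank) (hyB : y ∈ B c)
    (hy : y ∈ M.E \ M.closure (t₁ '' S)) (hD₁ : B c \ {y} ⊆ M.closure (t₁ '' S))
    (hD₂ : B c \ {y} ⊆ M.closure (t₂ '' S)) :
    M.HasDisjointIndepTransversals B (insert c S) := by
  classical
  have hDind : M.Indep (B c \ {y}) := hBc.indep.subset sdiff_subset
  have hSD : S.encard ≤ (B c \ {y}).encard := by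
    rw [← ENat.add_le_add_iff_right ENat.one_ne_top, encard_sdiff_singleton_add_one hyB,
      hBc.encard_eq_eRank, hS]
  have hclD {t : ι → α} (ht : M.IsIndepTransversal B S t) (hDt : B c \ {y} ⊆ M.closure (t '' S)) :
      M.closure (B c \ {y}) = M.closure (t '' S) :=
    hDind.closure_eq_closure_of_subset_closure ht.indep hDind.finite hDt (by rwa [ht.encard_image])
  have hcl : M.closure (t₁ '' S) = M.closure (t₂ '' S) := by rw [← hclD h₁ hD₁, hclD h₂ hD₂]
  obtain ⟨w, hwB, hw⟩ := h₂.exists_mem_notMem_closure hBc₀ (h₂.encard_lt_eRank hS)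
  have h₂' : M.IsIndepTransversal B S (update t₂ c₀ w) := by
    have h := (h₂.mono (sdiff_subset (t := {c₀}))).update_insert (fun h ↦ h.2 rfl) hwB
      ⟨hw.1, fun h ↦ hw.2 (M.closure_subset_closure (image_mono sdiff_subset) h)⟩
    rwa [insert_sdiff_singleton, insert_eq_of_mem hc₀] at h
  have hw' : w ∈ update t₂ c₀ w '' S := ⟨c₀, hc₀, update_self ..⟩
  obtain ⟨y', ⟨hy'B, hy'y⟩, hy'⟩ : ∃ y' ∈ B c \ {y}, y' ∉ M.closure (update t₂ c₀ w '' S) := by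
    refine not_subset.1 fun hD ↦ hw.2 ?_
    rw [← hclD h₂ hD₂, hclD h₂' hD]
    exact M.subset_closure _ h₂'.indep.subset_ground hw'
  refine h₁.hasDisjointIndepTransversals_insert h₂' ?_ hc hyB hy'B hy
    ⟨hBc.subset_ground hy'B, hy'⟩ (Ne.symm hy'y)
  intro i hi
  obtain rfl | hi₀ := eq_or_ne i c₀
  · rw [update_self]
    rintro rfl
    exact hw.2 (hcl ▸ M.subset_closure _ h₁.indep.subset_ground (mem_image_of_mem t₁ hi))
  · rw [update_of_ne hi₀]
    exact hne i hi

end IsIndepTransversal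

lemma HasDisjointIndepTransversals.insert_of_encard_add_one_lt
    (h : M.HasDisjointIndepTransversals B S) (hc : c ∉ S) (hBc : M.IsBase (B c))
    (hS : S.encard + 1 < M.eRank) :
    M.HasDisjointIndepTransversals B (insert c S) := by
  obtain ⟨t₁, t₂, h₁, h₂, hne⟩ := h
  obtain ⟨y, hyB, hy⟩ := h₂.exists_mem_notMem_closure hBc (le_self_add.trans_lt hS)
  obtain ⟨x, ⟨hxB, hxy⟩, hx⟩ := h₁.indep.exists_mem_notMem_closure_of_encard_lt
    (hBc.indep.subset sdiff_subset : M.Indep (B c \ {y})) <| by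
    rw [h₁.encard_image, ← ENat.add_lt_add_iff_right ENat.one_ne_top,
      encard_sdiff_singleton_add_one hyB, hBc.encard_eq_eRank]
    exact hS
  exact h₁.hasDisjointIndepTransversals_insert h₂ hne hc hxB hyB hx hy hxy

lemma HasDisjointIndepTransversals.insert_of_encard_add_one_eq [M.RankFinite]
    (h : M.HasDisjointIndepTransversals B S) (hc : c ∉ S) (hSne : S.Nonempty)
    (hB : ∀ i, M.IsBase (B i)) (hS : S.encard + 1 = M.eRank) :
    M.HasDisjointIndepTransversals B (insert c S) := by
  obtain ⟨t₁, t₂, h₁, h₂, hne⟩ := h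
  obtain ⟨c₀, hc₀⟩ := hSne
  have hlt := h₁.encard_lt_eRank hS
  obtain ⟨x, hxB, hx⟩ := h₁.exists_mem_notMem_closure (hB c) hlt
  obtain ⟨y, hyB, hy⟩ := h₂.exists_mem_notMem_closure (hB c) hlt
  by_cases hdist : ∃ x ∈ B c, x ∈ M.E \ M.closure (t₁ '' S) ∧
      ∃ y ∈ B c, y ∈ M.E \ M.closure (t₂ '' S) ∧ x ≠ y
  · obtain ⟨x, hxB, hx, y, hyB, hy, hxy⟩ := hdist
    exact h₁.hasDisjointIndepTransversals_insert h₂ hne hc hxB hyB hx hy hxy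
  push Not at hdist
  obtain rfl : x = y := hdist x hxB hx y hyB hy
  refine h₁.hasDisjointIndepTransversals_insert_of_subset_closure h₂ hne hc hc₀ (hB c) (hB c₀) hS
    hxB hx ?_ ?_ <;> rintro z ⟨hzB, hzx⟩ <;> by_contra hz
  · exact hzx (hdist z hzB ⟨(hB c).subset_ground hzB, hz⟩ x hxB hy)
  · exact hzx (hdist x hxB hx z hzB ⟨(hB c).subset_ground hzB, hz⟩).symm

theorem hasDisjointIndepTransversals_of_encard_le [M.RankFinite] (hB : ∀ i, M.IsBase (B i))
    (hM : 2 ≤ M.eRank) (hS : S.Finite) (hSM : S.encard ≤ M.eRank) :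
    M.HasDisjointIndepTransversals B S := by
  induction S, hS using Set.Finite.induction_on with
  | empty =>
    obtain ⟨B₀, hB₀⟩ := M.exists_isBase
    obtain ⟨e, -⟩ : B₀.Nonempty := by
      rw [← encard_pos, hB₀.encard_eq_eRank]
      exact lt_of_lt_of_le (by norm_num) hM
    exact ⟨fun _ ↦ e, fun _ ↦ e, .empty M B _, .empty M B _, by simp⟩
  | @insert c S hc hS ih =>
    rw [encard_insert_of_notMem hc] at hSM
    have h := ih (le_self_add.trans hSM)
    obtain hlt | heq := hSM.lt_or_eq
    · exact h.insert_of_encard_add_one_lt hc (hB c) hlt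
    refine h.insert_of_encard_add_one_eq hc ?_ hB heq
    rw [nonempty_iff_ne_empty]
    rintro rfl
    rw [← heq] at hM
    norm_num at hM

end Matroid

open Matroid

theorem stmt_12 {α : Type*} (M : Matroid α) [M.Finite] (n : ℕ) (hn : 2 ≤ n)
    (B : Fin n → Set α) (hB : ∀ i, M.IsBase (B i)) (hcard : ∀ i, (B i).ncard = n) :
    ∃ T₁ T₂ : Fin n → α,
      (∀ i, T₁ i ∈ B i) ∧ (∀ i, T₂ i ∈ B i) ∧
      M.IsBase (Set.range T₁) ∧ M.IsBase (Set.range T₂) ∧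
      Function.Injective T₁ ∧ Function.Injective T₂ ∧
      (∀ i, T₁ i ≠ T₂ i) := by
  have hrank : M.eRank = n := by
    have hB₀ := hB ⟨0, by omega⟩
    rw [← hB₀.encard_eq_eRank, ← hB₀.finite.cast_ncard_eq, hcard]
  obtain ⟨t₁, t₂, h₁, h₂, hne⟩ := hasDisjointIndepTransversals_of_encard_le hB
    (by rw [hrank]; exact_mod_cast hn) finite_univ (by simp [hrank])
  have hι : ENat.card (Fin n) = M.eRank := by simp [hrank]
  exact ⟨t₁, t₂, fun i ↦ h₁.mem i (mem_univ i), fun i ↦ h₂.mem i (mem_univ i),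
    h₁.isBase_range hι, h₂.isBase_range hι, injOn_univ.1 h₁.injOn, injOn_univ.1 h₂.injOn,
    fun i ↦ hne i (mem_univ i)⟩
end

section
/- Let S be a nonempty rainbow independent set in a rank-n matroid with colour classes B₁,…,Bₙ, let b be a colour not appearing in S, and let F_b ⊆ B_b. Then either there exists y ∈ B_b \ F_b with S + (y,b) an RIS or with S − (x',c) + (y,b) + (x,c) an RIS for some (x',c) ∈ S and some x (i.e., an (S,b)-addable element outside F), or there are at least n − |F_b| colours c appearing in S that are (S,b)-swappable: for such c there exist (x',c) ∈ S and y ∈ B_b \ F_b with S + (y,b) − (x',c) an RIS. -/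
/-!
Let `C` be the set of swappable colours and `W` the elements of `π(S)` whose colour lies in `C`.
If no `y ∈ B_b \ F_b` can be added to `S`, every such `y` lies in the closure of `W`: either
`y ∈ π(S)`, and recolouring `y` with `b` shows its colour is swappable, or `y` is spanned by
`π(S)`, and each element of its fundamental circuit other than `y` can be exchanged for `y`,
hence lies in `W`. As `B_b \ F_b` is independent,
`n - |F_b| = |B_b \ F_b| ≤ r(W) = |W| = |C|`.
-/

/-- A rainbow independent set: a set of (element, colour) pairs drawn from the colour
classes `B`, with pairwise distinct matroid elements forming an independent set, and
pairwise distinct colours. -/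
def IsRIS {α : Type*} {n : ℕ} (M : Matroid α) (B : Fin n → Set α)
    (S : Set (α × Fin n)) : Prop :=
  (∀ p ∈ S, p.1 ∈ B p.2) ∧ S.InjOn Prod.fst ∧ S.InjOn Prod.snd ∧
    M.Indep (Prod.fst '' S)

open Set

namespace Matroid

variable {α : Type*} {M : Matroid α} {I W : Set α} {y : α}

lemma Indep.mem_closure_of_forall_exchange (hI : M.Indep I) (hyI : y ∉ I)
    (hy : y ∈ M.closure I) (hW : ∀ x ∈ I, M.Indep (insert y (I \ {x})) → x ∈ W) :
    y ∈ M.closure W := by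
  have hC := hI.fundCircuit_isCircuit hy hyI
  refine M.closure_subset_closure ?_
    (hC.mem_closure_sdiff_singleton_of_mem (M.mem_fundCircuit y I))
  rintro x ⟨hxC, hxy⟩
  have hxy : x ≠ y := hxy
  refine hW x ((M.fundCircuit_subset_insert y I hxC).resolve_left hxy) ?_
  rw [insert_sdiff_singleton_comm hxy.symm]
  exact (hI.mem_fundCircuit_iff hy hyI).1 hxC

end Matroid

section IsRIS

variable {α : Type*} {n : ℕ} {M : Matroid α} {B : Fin n → Set α} {S T : Set (α × Fin n)}
  {b c : Fin n} {x y : α}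

lemma IsRIS.subset (hS : IsRIS M B S) (hTS : T ⊆ S) : IsRIS M B T :=
  ⟨fun p hp ↦ hS.1 p (hTS hp), hS.2.1.mono hTS, hS.2.2.1.mono hTS,
    hS.2.2.2.subset (image_mono hTS)⟩

lemma IsRIS.insert_of_indep (hS : IsRIS M B S) (hb : ∀ z, (z, b) ∉ S) (hy : y ∈ B b)
    (hyS : y ∉ Prod.fst '' S) (hind : M.Indep (insert y (Prod.fst '' S))) :
    IsRIS M B (insert (y, b) S) := by
  refine ⟨?_, (injOn_insert (hb y)).2 ⟨hS.2.1, hyS⟩,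
    (injOn_insert (hb y)).2 ⟨hS.2.2.1, ?_⟩, by rwa [image_insert_eq]⟩
  · rintro p (rfl | hp)
    exacts [hy, hS.1 p hp]
  · rintro ⟨⟨z, c⟩, hzc, rfl⟩
    exact hb z hzc

lemma IsRIS.image_fst_sdiff_singleton (hS : IsRIS M B S) (hxc : (x, c) ∈ S) :
    Prod.fst '' (S \ {(x, c)}) = Prod.fst '' S \ {x} := by
  rw [hS.2.1.image_sdiff, inter_singleton_of_mem hxc, image_singleton]

lemma IsRIS.exchange_of_indep (hS : IsRIS M B S) (hb : ∀ z, (z, b) ∉ S) (hxc : (x, c) ∈ S)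
    (hy : y ∈ B b) (hyS : y ∉ Prod.fst '' S \ {x})
    (hind : M.Indep (insert y (Prod.fst '' S \ {x}))) :
    IsRIS M B (insert (y, b) (S \ {(x, c)})) := by
  rw [← hS.image_fst_sdiff_singleton hxc] at hyS hind
  exact (hS.subset sdiff_subset).insert_of_indep (fun z hz ↦ hb z hz.1) hy hyS hind

lemma IsRIS.mem_closure_of_not_isRIS_insert (hS : IsRIS M B S) (hb : ∀ z, (z, b) ∉ S)
    (hy : y ∈ B b) (hyE : y ∈ M.E) (hadd : ¬ IsRIS M B (insert (y, b) S)) :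
    y ∈ M.closure (Prod.fst '' {p ∈ S | IsRIS M B (insert (y, b) (S \ {p}))}) := by
  have hI : M.Indep (Prod.fst '' S) := hS.2.2.2
  by_cases hyS : y ∈ Prod.fst '' S
  · obtain ⟨⟨x, c⟩, hxc, rfl⟩ := hyS
    refine M.mem_closure_of_mem' ⟨(x, c), ⟨hxc, ?_⟩, rfl⟩ hyE
    refine hS.exchange_of_indep hb hxc hy (fun h ↦ h.2 rfl) ?_
    rwa [insert_sdiff_singleton, insert_eq_of_mem (mem_image_of_mem Prod.fst hxc)]
  · have hycl : y ∈ M.closure (Prod.fst '' S) := by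
      by_contra hcl
      exact hadd <| hS.insert_of_indep hb hy hyS <|
        (hI.insert_indep_iff_of_notMem hyS).2 ⟨hyE, hcl⟩
    refine hI.mem_closure_of_forall_exchange hyS hycl ?_
    rintro _ ⟨⟨x, c⟩, hxc, rfl⟩ hind
    exact ⟨(x, c), ⟨hxc, hS.exchange_of_indep hb hxc hy (fun h ↦ hyS h.1) hind⟩, rfl⟩

theorem IsRIS.encard_le_encard_swappable (hS : IsRIS M B S) (hb : ∀ z, (z, b) ∉ S)
    {D : Set α} (hD : M.Indep D) (hDB : D ⊆ B b)
    (hadd : ∀ y ∈ D, ¬ IsRIS M B (insert (y, b) S)) :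
    D.encard ≤ {c | ∃ x, (x, c) ∈ S ∧ ∃ y ∈ D,
      IsRIS M B (insert (y, b) (S \ {(x, c)}))}.encard := by
  set T := {p ∈ S | ∃ y ∈ D, IsRIS M B (insert (y, b) (S \ {p}))}
  have hTS : T ⊆ S := sep_subset _ _
  have hDcl : D ⊆ M.closure (Prod.fst '' T) := by
    intro y hy
    refine M.closure_subset_closure (image_mono ?_)
      (hS.mem_closure_of_not_isRIS_insert hb (hDB hy) (hD.subset_ground hy) (hadd y hy))
    exact fun p hp ↦ ⟨hp.1, y, hy, hp.2⟩
  calc D.encard ≤ M.eRk (M.closure (Prod.fst '' T)) := hD.encard_le_eRk_of_subset hDcl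
    _ = (Prod.fst '' T).encard := by
      rw [M.eRk_closure_eq, (hS.2.2.2.subset (image_mono hTS)).eRk_eq_encard]
    _ = (Prod.snd '' T).encard := by
      rw [(hS.2.1.mono hTS).encard_image, (hS.2.2.1.mono hTS).encard_image]
    _ ≤ _ := encard_le_encard <| by
      rintro _ ⟨⟨x, c⟩, ⟨hxc, hswap⟩, rfl⟩
      exact ⟨x, hxc, hswap⟩

end IsRIS

theorem stmt_14_general {α : Type*} (M : Matroid α) (n : ℕ)
    (B : Fin n → Set α) (hB : ∀ i, M.IsBase (B i)) (hcard : ∀ i, (B i).ncard = n)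
    (F : Set (α × Fin n)) (S : Set (α × Fin n)) (hS : IsRIS M B S)
    (b : Fin n) (hb : ∀ x, (x, b) ∉ S) :
    (∃ y ∈ B b \ {x | x ∈ B b ∧ (x, b) ∈ F},
      IsRIS M B (insert (y, b) S) ∨
      ∃ x' c x, (x', c) ∈ S ∧ x ∈ B c ∧
        IsRIS M B (insert (x, c) (insert (y, b) (S \ {(x', c)})))) ∨
    n - {x | x ∈ B b ∧ (x, b) ∈ F}.ncard ≤
      {c : Fin n | ∃ x', (x', c) ∈ S ∧ ∃ y, y ∈ B b ∧ (y, b) ∉ F ∧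
        IsRIS M B (insert (y, b) (S \ {(x', c)}))}.ncard := by
  set Fb := {x | x ∈ B b ∧ (x, b) ∈ F}
  by_cases hadd : ∃ y ∈ B b \ Fb, IsRIS M B (insert (y, b) S)
  · obtain ⟨y, hy, hyS⟩ := hadd
    exact Or.inl ⟨y, hy, Or.inl hyS⟩
  push Not at hadd
  right
  have hFbB : Fb ⊆ B b := fun _ hx ↦ hx.1
  have hBfin : (B b).Finite := finite_of_ncard_pos (by rw [hcard]; exact b.pos)
  calc n - Fb.ncard = (B b \ Fb).ncard := by
        rw [ncard_sdiff hFbB (hBfin.subset hFbB), hcard]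
    _ ≤ _ := ENat.toNat_le_toNat
      (hS.encard_le_encard_swappable hb ((hB b).indep.subset sdiff_subset) sdiff_subset hadd)
      (toFinite _).encard_lt_top.ne
    _ ≤ _ := ncard_le_ncard <| by
      rintro c ⟨x, hxc, y, ⟨hyB, hyF⟩, hswap⟩
      exact ⟨x, hxc, y, hyB, fun hF ↦ hyF ⟨hyB, hF⟩, hswap⟩

theorem stmt_14 {α : Type*} (M : Matroid α) [M.Finite] (n : ℕ)
    (B : Fin n → Set α) (hB : ∀ i, M.IsBase (B i)) (hcard : ∀ i, (B i).ncard = n)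
    (F : Set (α × Fin n)) (S : Set (α × Fin n)) (hS : IsRIS M B S)
    (hSne : S.Nonempty) (b : Fin n) (hb : ∀ x, (x, b) ∉ S) :
    (∃ y ∈ B b \ {x | x ∈ B b ∧ (x, b) ∈ F},
      IsRIS M B (insert (y, b) S) ∨
      ∃ x' c x, (x', c) ∈ S ∧ x ∈ B c ∧
        IsRIS M B (insert (x, c) (insert (y, b) (S \ {(x', c)})))) ∨
    n - {x | x ∈ B b ∧ (x, b) ∈ F}.ncard ≤
      {c : Fin n | ∃ x', (x', c) ∈ S ∧ ∃ y, y ∈ B b ∧ (y, b) ∉ F ∧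
        IsRIS M B (insert (y, b) (S \ {(x', c)}))}.ncard :=
  stmt_14_general M n B hB hcard F S hS b hb
end
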